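/- Let [M] be the set of 3×3 real matrices M with m₁₁ ∈ [4, 5], m₁₂ ∈ [−1, 2], m₁₃ = 0, m₂₁ ∈ [−1, 2], m₂₂ ∈ [2, 3], m₂₃ = 1, m₃₁ = 0, m₃₂ = 1, m₃₃ = 2, and let [q] be the set of q ∈ ℝ³ with q₁ ∈ [−2, −1], q₂ ∈ [−1, 1], q₃ ∈ [−2, −1]. Then for every z₁ ∈ [1/5, 1/2] and every z₃ ∈ [1/2, 1], there exist a symmetric matrix M ∈ [M] and a vector q ∈ [q] such that z = (z₁, 0, z₃) solves LCP(M, q). -/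

import Mathlib

/-- `z` solves the linear complementarity problem LCP(M, q). -/
def SolvesLCP {n : ℕ} (M : Matrix (Fin n) (Fin n) ℝ) (q z : Fin n → ℝ) : Prop :=
  (∀ i, 0 ≤ q i + M.mulVec z i) ∧ (∀ i, 0 ≤ z i) ∧ (∑ i, (q i + M.mulVec z i) * z i) = 0

/-- Membership of a 3×3 matrix in the interval matrix of Example 6.2.3. -/
def MemIntervalM (M : Matrix (Fin 3) (Fin 3) ℝ) : Prop :=
  M 0 0 ∈ Set.Icc (4 : ℝ) 5 ∧ M 0 1 ∈ Set.Icc (-1 : ℝ) 2 ∧ M 0 2 = 0 ∧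
  M 1 0 ∈ Set.Icc (-1 : ℝ) 2 ∧ M 1 1 ∈ Set.Icc (2 : ℝ) 3 ∧ M 1 2 = 1 ∧
  M 2 0 = 0 ∧ M 2 1 = 1 ∧ M 2 2 = 2

/-- Membership of a vector in the interval vector of Example 6.2.3. -/
def MemIntervalQ (q : Fin 3 → ℝ) : Prop :=
  q 0 ∈ Set.Icc (-2 : ℝ) (-1) ∧ q 1 ∈ Set.Icc (-1 : ℝ) 1 ∧ q 2 ∈ Set.Icc (-2 : ℝ) (-1)

/-
With `M = diag(a) ⊕ [[2, 1], [1, 2]]` and `q = (-a z₁, 0, -2 z₃)` one gets `q + M z = (0, z₃, 0)`,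
which is nonnegative and complementary to `z = (z₁, 0, z₃)`.  What remains is `q₁ ∈ [-2, -1]`,
i.e. `a z₁ ∈ [1, 2]` for some `a ∈ [4, 5]`: take `a = 5` if `z₁ ≤ 1/4` and `a = 4` otherwise.
-/

theorem solvesLCP_of_complementary {n : ℕ} {M : Matrix (Fin n) (Fin n) ℝ} {q z : Fin n → ℝ}
    (hw : 0 ≤ q + M.mulVec z) (hz : 0 ≤ z) (hcompl : ∀ i, (q + M.mulVec z) i * z i = 0) :
    SolvesLCP M q z :=
  ⟨hw, hz, Finset.sum_eq_zero fun i _ ↦ hcompl i⟩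

theorem exists_mem_Icc_four_five_mul_mem_Icc_one_two {x : ℝ} (hx : x ∈ Set.Icc (1/5 : ℝ) (1/2)) :
    ∃ a ∈ Set.Icc (4 : ℝ) 5, a * x ∈ Set.Icc (1 : ℝ) 2 := by
  obtain ⟨hlo, hhi⟩ := hx
  rcases le_total x (1/4) with hx | hx
  · exact ⟨5, by norm_num, by constructor <;> linarith⟩
  · exact ⟨4, by norm_num, by constructor <;> linarith⟩

theorem stmt15 (z₁ z₃ : ℝ) (hz₁ : z₁ ∈ Set.Icc (1/5 : ℝ) (1/2)) (hz₃ : z₃ ∈ Set.Icc (1/2 : ℝ) 1) :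
    ∃ (M : Matrix (Fin 3) (Fin 3) ℝ) (q : Fin 3 → ℝ),
      MemIntervalM M ∧ M.IsSymm ∧ MemIntervalQ q ∧
      SolvesLCP M q ![z₁, 0, z₃] := by
  obtain ⟨a, ha, ⟨haz_lo, haz_hi⟩⟩ := exists_mem_Icc_four_five_mul_mem_Icc_one_two hz₁
  obtain ⟨hz₃_lo, hz₃_hi⟩ := hz₃
  have hz₁_nonneg : 0 ≤ z₁ := by linarith [hz₁.1]
  have hw : ![-(a * z₁), 0, -2 * z₃] +
      (!![a, 0, 0; 0, 2, 1; 0, 1, 2] : Matrix (Fin 3) (Fin 3) ℝ).mulVec ![z₁, 0, z₃] =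
      ![0, z₃, 0] := by
    ext i; fin_cases i <;> simp <;> ring
  refine ⟨!![a, 0, 0; 0, 2, 1; 0, 1, 2], ![-(a * z₁), 0, -2 * z₃], ?_, ?_, ?_, ?_⟩
  · exact ⟨ha, by norm_num, rfl, by norm_num, by norm_num, rfl, rfl, rfl, rfl⟩
  · ext i j; fin_cases i <;> fin_cases j <;> rfl
  · refine ⟨?_, by norm_num, ?_⟩ <;> simp only [Matrix.cons_val, Set.mem_Icc] <;>
      constructor <;> linarith
  · apply solvesLCP_of_complementary
    · rw [hw]; intro i; fin_cases i <;> simp; linarith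
    · intro i; fin_cases i <;> simp [hz₁_nonneg]; linarith
    · rw [hw]; intro i; fin_cases i <;> simp
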